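/- arXiv:2603.25574 — 5 statements merged into one kernel-verified Lean document; each statement's English description precedes it below -/
import Mathlib

section
/- Let Σ be a diagonal ν×ν matrix with diagonal entries in (0,1], let B̃ be a ν×ν real matrix, and suppose there exists a diagonal positive definite matrix Λ such that 2Λ - Λ B̃ - B̃ᵀ Λ ≻ 0. Then the matrix I_ν - Σ B̃ is invertible. -/
open Matrix

/-- Well-posedness: if `Σ` is diagonal with entries in `(0,1]` and there is a diagonal
positive definite `Λ` with `2Λ - ΛB̃ - B̃ᵀΛ ≻ 0`, then `I - ΣB̃` is invertible. -/
theorem wellposed_invertible {ν : ℕ}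
    (σd : Fin ν → ℝ) (hσd : ∀ i, σd i ∈ Set.Ioc (0 : ℝ) 1)
    (Bt : Matrix (Fin ν) (Fin ν) ℝ)
    (lam : Fin ν → ℝ) (hlam : ∀ i, 0 < lam i)
    (hLMI : ((2 : ℝ) • Matrix.diagonal lam - Matrix.diagonal lam * Bt
      - Btᵀ * Matrix.diagonal lam).PosDef) :
    IsUnit ((1 : Matrix (Fin ν) (Fin ν) ℝ) - Matrix.diagonal σd * Bt) := by
  rw [Matrix.isUnit_iff_isUnit_det, isUnit_iff_ne_zero]
  intro hdet
  obtain ⟨v, hv0, hv⟩ := Matrix.exists_mulVec_eq_zero_iff.mpr hdet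
  set w : Fin ν → ℝ := Bt *ᵥ v with hw
  have hvw : ∀ i, v i = σd i * w i := by
    intro i
    have h := congrFun hv i
    simp only [Matrix.sub_mulVec, Matrix.one_mulVec, ← Matrix.mulVec_mulVec,
      Pi.sub_apply, Pi.zero_apply, sub_eq_zero, Matrix.mulVec_diagonal] at h
    exact h
  have hpos := hLMI.dotProduct_mulVec_pos hv0
  have hform : star v ⬝ᵥ (((2 : ℝ) • Matrix.diagonal lam - Matrix.diagonal lam * Bt
      - Btᵀ * Matrix.diagonal lam) *ᵥ v)
      = ∑ i, 2 * lam i * σd i * (σd i - 1) * (w i) ^ 2 := by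
    have hstar : star v = v := by simp
    rw [hstar, Matrix.sub_mulVec, Matrix.sub_mulVec, Matrix.smul_mulVec,
      ← Matrix.mulVec_mulVec, ← Matrix.mulVec_mulVec,
      dotProduct_sub, dotProduct_sub, dotProduct_smul]
    have h1 : v ⬝ᵥ (Matrix.diagonal lam *ᵥ v) = ∑ i, lam i * v i * v i := by
      simp [dotProduct, Matrix.mulVec_diagonal]
      exact Finset.sum_congr rfl fun i _ => by ring
    have h2 : v ⬝ᵥ (Matrix.diagonal lam *ᵥ (Bt *ᵥ v)) = ∑ i, lam i * v i * w i := by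
      simp [dotProduct, Matrix.mulVec_diagonal, hw]
      exact Finset.sum_congr rfl fun i _ => by ring
    have h3 : v ⬝ᵥ (Btᵀ *ᵥ (Matrix.diagonal lam *ᵥ v)) = ∑ i, lam i * v i * w i := by
      rw [Matrix.dotProduct_mulVec, Matrix.vecMul_transpose, ← hw]
      simp [dotProduct, Matrix.mulVec_diagonal]
      exact Finset.sum_congr rfl fun i _ => by ring
    rw [h1, h2, h3]
    rw [smul_eq_mul, Finset.mul_sum, ← Finset.sum_sub_distrib, ← Finset.sum_sub_distrib]
    apply Finset.sum_congr rfl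
    intro i _
    rw [hvw i]
    ring
  rw [hform] at hpos
  have hle : ∑ i, 2 * lam i * σd i * (σd i - 1) * (w i) ^ 2 ≤ 0 := by
    apply Finset.sum_nonpos
    intro i _
    have h1 := (hσd i).1
    have h2 := (hσd i).2
    have : 2 * lam i * σd i * (σd i - 1) ≤ 0 := by nlinarith [mul_pos (hlam i) h1]
    nlinarith [sq_nonneg (w i)]
  linarith
end

section
/- Let B̃ be a ν×ν real matrix such that there exists a diagonal positive definite matrix Λ with 2Λ - ΛB̃ - B̃ᵀΛ ≻ 0, and let σ : ℝ^ν → ℝ^ν act componentwise with each component 1-Lipschitz. Then for every b ∈ ℝ^ν the implicit equation s = σ(B̃ s + b) admits at most one solution s ∈ ℝ^ν. -/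
open Matrix

lemma key_scalar (f : ℝ → ℝ) (hL : LipschitzWith 1 f) (hM : Monotone f) (a b : ℝ) :
    0 ≤ (f a - f b) * ((a - b) - (f a - f b)) := by
  have habs : |f a - f b| ≤ |a - b| := by
    have := hL.dist_le_mul a b
    simpa [Real.dist_eq] using this
  rcases le_total a b with h | h
  · have h1 : f a - f b ≤ 0 := sub_nonpos.2 (hM h)
    have h2 : (a - b) - (f a - f b) ≤ 0 := by
      have h3 := (abs_le.mp habs).1
      rw [abs_of_nonpos (sub_nonpos.2 h)] at h3
      linarith
    nlinarith
  · have h1 : 0 ≤ f a - f b := sub_nonneg.2 (hM h)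
    have h2 : 0 ≤ (a - b) - (f a - f b) := by
      have h3 := (abs_le.mp habs).2
      rw [abs_of_nonneg (sub_nonneg.2 h)] at h3
      linarith
    exact mul_nonneg h1 h2

/-- Uniqueness of solutions of the implicit equation `s = σ(B̃ s + b)` for
componentwise 1-Lipschitz nondecreasing `σ`, under the well-posedness LMI
`2Λ - ΛB̃ - B̃ᵀΛ ≻ 0` for some diagonal positive definite `Λ`. -/
theorem implicit_eq_unique {ν : ℕ}
    (Bt : Matrix (Fin ν) (Fin ν) ℝ)
    (lam : Fin ν → ℝ) (hlam : ∀ i, 0 < lam i)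
    (hLMI : ((2 : ℝ) • Matrix.diagonal lam - Matrix.diagonal lam * Bt
      - Btᵀ * Matrix.diagonal lam).PosDef)
    (σ : Fin ν → ℝ → ℝ)
    (hLip : ∀ i, LipschitzWith 1 (σ i))
    (hMono : ∀ i, Monotone (σ i)) :
    ∀ b s₁ s₂ : Fin ν → ℝ,
      (∀ i, s₁ i = σ i ((Bt *ᵥ s₁ + b) i)) →
      (∀ i, s₂ i = σ i ((Bt *ᵥ s₂ + b) i)) →
      s₁ = s₂ := by
  intro b s₁ s₂ h1 h2
  by_contra hne
  set x : Fin ν → ℝ := s₁ - s₂ with hxdef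
  have hx : x ≠ 0 := sub_ne_zero.2 hne
  -- componentwise sector inequality
  have hsect : ∀ i, 0 ≤ x i * ((Bt *ᵥ x) i - x i) := by
    intro i
    have hv : (Bt *ᵥ s₁ + b) i - (Bt *ᵥ s₂ + b) i = (Bt *ᵥ x) i := by
      simp [hxdef, Matrix.mulVec_sub]
    have key := key_scalar (σ i) (hLip i) (hMono i) ((Bt *ᵥ s₁ + b) i) ((Bt *ᵥ s₂ + b) i)
    have hxi : x i = σ i ((Bt *ᵥ s₁ + b) i) - σ i ((Bt *ᵥ s₂ + b) i) := by
      simp only [hxdef, Pi.sub_apply, ← h1 i, ← h2 i]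
    rw [← hxi, hv] at key
    exact key
  have hsum : 0 ≤ ∑ i, lam i * (x i * ((Bt *ᵥ x) i - x i)) :=
    Finset.sum_nonneg fun i _ => mul_nonneg (hlam i).le (hsect i)
  -- quadratic form value
  have hform : dotProduct (star x)
      ((((2 : ℝ) • Matrix.diagonal lam - Matrix.diagonal lam * Bt
        - Btᵀ * Matrix.diagonal lam)) *ᵥ x)
      = -2 * ∑ i, lam i * (x i * ((Bt *ᵥ x) i - x i)) := by
    rw [star_trivial]
    rw [Matrix.sub_mulVec, Matrix.sub_mulVec, dotProduct_sub, dotProduct_sub,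
      Matrix.smul_mulVec, dotProduct_smul,
      ← Matrix.mulVec_mulVec, ← Matrix.mulVec_mulVec,
      Matrix.dotProduct_mulVec x Btᵀ, Matrix.vecMul_transpose]
    simp only [dotProduct, Matrix.mulVec_diagonal, smul_eq_mul, Finset.mul_sum,
      ← Finset.sum_sub_distrib, Finset.mul_sum, neg_mul, ← Finset.sum_neg_distrib]
    exact Finset.sum_congr rfl fun i _ => by ring
  have hpos := hLMI.dotProduct_mulVec_pos hx
  rw [hform] at hpos
  linarith
end

section
/- Consider the discrete-time system x(k+1) = f(x(k), u(k)) on ℝ^n with input in ℝ^m, and suppose there exists a function V : ℝ^n × ℝ^n → ℝ_{≥0}, K∞-functions α₁, α₂, α₃ and a K-function α₄ such that α₁(‖x_a - x_b‖) ≤ V(x_a, x_b) ≤ α₂(‖x_a - x_b‖) and V(f(x_a,u_a), f(x_b,u_b)) - V(x_a,x_b) ≤ -α₃(‖x_a - x_b‖) + α₄(‖u_a - u_b‖) for all x_a, x_b ∈ ℝ^n, u_a, u_b ∈ ℝ^m. Then the system is incrementally input-to-state stable: there exist β ∈ KL and γ ∈ K∞ such that for any two initial states x_a(0), x_b(0)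 and input sequences u_a, u_b, ‖x_a(k) - x_b(k)‖ ≤ β(‖x_a(0) - x_b(0)‖, k) + γ(sup_{h≥0} ‖u_a(h) - u_b(h)‖) for all k ≥ 0. -/
open Filter

/-- Class K function (on the nonnegative reals). -/
def IsKFun (α : ℝ → ℝ) : Prop :=
  Continuous α ∧ StrictMonoOn α (Set.Ici 0) ∧ α 0 = 0

/-- Class K∞ function. -/
def IsKInfFun (α : ℝ → ℝ) : Prop :=
  IsKFun α ∧ Tendsto α atTop atTop

/-- Class KL function (discrete time). -/
def IsKLFun (β : ℝ → ℕ → ℝ) : Prop :=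
  (∀ k, IsKFun fun s => β s k) ∧
  (∀ s > (0 : ℝ), StrictAnti fun k => β s k) ∧
  (∀ s > (0 : ℝ), Tendsto (fun k => β s k) atTop (nhds 0))

namespace DeltaAux

noncomputable def ext (g : ℝ → ℝ) (s : ℝ) : ℝ := if 0 ≤ s then g s else s

lemma ext_of_nonneg {g : ℝ → ℝ} {s : ℝ} (hs : 0 ≤ s) : ext g s = g s := if_pos hs

lemma ext_strictMono {g : ℝ → ℝ} (hg : IsKFun g) : StrictMono (ext g) := by
  intro s t hst
  rcases le_or_gt 0 s with hs | hs
  · rw [ext_of_nonneg hs, ext_of_nonneg (hs.trans hst.le)]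
    exact hg.2.1 hs (hs.trans hst.le) hst
  · rcases le_or_gt 0 t with ht | ht
    · rw [ext, if_neg (not_le.2 hs), ext_of_nonneg ht]
      calc s < 0 := hs
        _ = g 0 := hg.2.2.symm
        _ ≤ g t := hg.2.1.monotoneOn Set.self_mem_Ici ht ht
    · rw [ext, if_neg (not_le.2 hs), ext, if_neg (not_le.2 ht)]
      exact hst

lemma ext_continuous {g : ℝ → ℝ} (hg : IsKFun g) : Continuous (ext g) := by
  refine Continuous.if_le hg.1 continuous_id continuous_const continuous_id ?_
  intro s h
  rw [← h, hg.2.2]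

lemma ext_zero {g : ℝ → ℝ} (hg : IsKFun g) : ext g 0 = 0 := by
  rw [ext_of_nonneg le_rfl, hg.2.2]

lemma ext_surjective {g : ℝ → ℝ} (hg : IsKInfFun g) : Function.Surjective (ext g) := by
  refine Continuous.surjective (ext_continuous hg.1) ?_ ?_
  · refine hg.2.congr' ?_
    filter_upwards [eventually_ge_atTop (0 : ℝ)] with s hs
    exact (ext_of_nonneg hs).symm
  · refine tendsto_id.congr' ?_
    filter_upwards [eventually_le_atBot (-1 : ℝ)] with s hs
    rw [ext, if_neg (by linarith)]; rfl

noncomputable def kiso (g : ℝ → ℝ) (hg : IsKInfFun g) : ℝ ≃o ℝ :=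
  StrictMono.orderIsoOfSurjective (ext g) (ext_strictMono hg.1) (ext_surjective hg)

noncomputable def kinv (g : ℝ → ℝ) (hg : IsKInfFun g) : ℝ → ℝ := fun y => (kiso g hg).symm y

lemma kinv_ext {g : ℝ → ℝ} (hg : IsKInfFun g) (x : ℝ) : kinv g hg (ext g x) = x := by
  simp [kinv, kiso]

lemma ext_kinv {g : ℝ → ℝ} (hg : IsKInfFun g) (y : ℝ) : ext g (kinv g hg y) = y := by
  exact (kiso g hg).apply_symm_apply y

lemma kinv_strictMono {g : ℝ → ℝ} (hg : IsKInfFun g) : StrictMono (kinv g hg) :=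
  (kiso g hg).symm.strictMono

lemma kinv_continuous {g : ℝ → ℝ} (hg : IsKInfFun g) : Continuous (kinv g hg) :=
  (kiso g hg).symm.continuous

lemma kinv_zero {g : ℝ → ℝ} (hg : IsKInfFun g) : kinv g hg 0 = 0 := by
  have := kinv_ext hg 0
  rwa [ext_zero hg.1] at this

lemma kinv_nonneg {g : ℝ → ℝ} (hg : IsKInfFun g) {y : ℝ} (hy : 0 ≤ y) : 0 ≤ kinv g hg y := by
  rw [← kinv_zero hg]
  exact (kinv_strictMono hg).monotone hy

end DeltaAux

namespace DeltaAux2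

noncomputable def reg (α : ℝ → ℝ) (v : ℝ) : ℝ :=
  sInf ((fun w => α w + |v - w|) '' Set.Ici 0)

noncomputable def rho (α : ℝ → ℝ) (v : ℝ) : ℝ := v - reg α v / 2

variable {α : ℝ → ℝ} (hsm : StrictMono α) (h0 : α 0 = 0)
include hsm h0
set_option linter.unusedSectionVars false
set_option linter.unusedVariables false

lemma alpha_nonneg {w : ℝ} (hw : 0 ≤ w) : 0 ≤ α w := h0 ▸ hsm.monotone hw

lemma reg_bddBelow (v : ℝ) : BddBelow ((fun w => α w + |v - w|) '' Set.Ici 0) := by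
  refine ⟨0, ?_⟩
  rintro x ⟨w, hw, rfl⟩
  exact add_nonneg (alpha_nonneg hsm h0 hw) (abs_nonneg _)

lemma reg_nonempty (v : ℝ) : ((fun w => α w + |v - w|) '' Set.Ici 0).Nonempty :=
  ⟨_, ⟨0, Set.self_mem_Ici, rfl⟩⟩

lemma reg_le (v : ℝ) {w : ℝ} (hw : 0 ≤ w) : reg α v ≤ α w + |v - w| :=
  csInf_le (reg_bddBelow hsm h0 v) ⟨w, hw, rfl⟩

lemma reg_nonneg (v : ℝ) : 0 ≤ reg α v := by
  refine le_csInf (reg_nonempty hsm h0 v) ?_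
  rintro x ⟨w, hw, rfl⟩
  exact add_nonneg (alpha_nonneg hsm h0 hw) (abs_nonneg _)

lemma reg_lip (v v' : ℝ) : reg α v ≤ reg α v' + |v - v'| := by
  have h : reg α v - |v - v'| ≤ reg α v' := by
    refine le_csInf (reg_nonempty hsm h0 v') ?_
    rintro x ⟨w, hw, rfl⟩
    show reg α v - |v - v'| ≤ α w + |v' - w|
    have h1 : reg α v ≤ α w + |v - w| := reg_le hsm h0 v hw
    have h2 : |v - w| ≤ |v' - w| + |v - v'| := by
      have : v - w = (v - v') + (v' - w) := by ring
      rw [this]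
      calc |(v - v') + (v' - w)| ≤ |v - v'| + |v' - w| := abs_add_le _ _
        _ = |v' - w| + |v - v'| := by ring
    linarith
  linarith

lemma reg_zero : reg α 0 = 0 := by
  refine le_antisymm ?_ (reg_nonneg hsm h0 0)
  have := reg_le hsm h0 0 (le_refl 0)
  simpa [h0] using this

lemma reg_le_self {v : ℝ} (hv : 0 ≤ v) : reg α v ≤ v := by
  have := reg_le hsm h0 v (le_refl 0)
  simpa [h0, abs_of_nonneg hv] using this

lemma reg_le_alpha {v : ℝ} (hv : 0 ≤ v) : reg α v ≤ α v := by
  have := reg_le hsm h0 v hv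
  simpa using this

lemma reg_lb {v : ℝ} (hv : 0 < v) : min (α (v / 2)) (v / 2) ≤ reg α v := by
  refine le_csInf (reg_nonempty hsm h0 v) ?_
  rintro x ⟨w, hw, rfl⟩
  rcases le_or_gt (v / 2) w with h | h
  · calc min (α (v / 2)) (v / 2) ≤ α (v / 2) := min_le_left _ _
      _ ≤ α w := hsm.monotone h
      _ ≤ α w + |v - w| := le_add_of_nonneg_right (abs_nonneg _)
  · calc min (α (v / 2)) (v / 2) ≤ v / 2 := min_le_right _ _
      _ ≤ v - w := by linarith
      _ ≤ |v - w| := le_abs_self _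
      _ ≤ α w + |v - w| := le_add_of_nonneg_left (alpha_nonneg hsm h0 hw)

lemma reg_continuous : Continuous (reg α) := by
  have : LipschitzWith 1 (reg α) := by
    refine LipschitzWith.of_dist_le_mul ?_
    intro x y
    rw [Real.dist_eq, Real.dist_eq, NNReal.coe_one, one_mul]
    rw [abs_le]
    constructor
    · have := reg_lip hsm h0 y x
      rw [abs_sub_comm y x] at this
      linarith
    · have := reg_lip hsm h0 x y
      linarith
  exact this.continuous

lemma rho_strictMono : StrictMono (rho α) := by
  intro a b hab
  have h := reg_lip hsm h0 b a
  rw [abs_of_nonneg (by linarith : (0:ℝ) ≤ b - a)] at h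
  simp only [rho]
  linarith

lemma rho_zero : rho α 0 = 0 := by simp [rho, reg_zero hsm h0]

lemma rho_le_self {v : ℝ} (hv : 0 ≤ v) : rho α v ≤ v := by
  have := reg_nonneg hsm h0 v
  simp only [rho]; linarith

lemma rho_ge_half {v : ℝ} (hv : 0 ≤ v) : v / 2 ≤ rho α v := by
  have := reg_le_self hsm h0 hv
  simp only [rho]; linarith

lemma rho_lt_self {v : ℝ} (hv : 0 < v) : rho α v < v := by
  have h1 : 0 < min (α (v / 2)) (v / 2) := by
    refine lt_min ?_ (by linarith)
    rw [← h0]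
    exact hsm (by linarith)
  have h2 := reg_lb hsm h0 hv
  simp only [rho]; linarith

lemma rho_continuous : Continuous (rho α) :=
  continuous_id.sub ((reg_continuous hsm h0).div_const 2)

lemma rho_key {v μ : ℝ} (hv : 0 ≤ v) (hc : 2 * μ ≤ α v) : v - α v + μ ≤ rho α v := by
  have := reg_le_alpha hsm h0 hv
  simp only [rho]; linarith

lemma iter_nonneg {v : ℝ} (hv : 0 ≤ v) (k : ℕ) : 0 ≤ (rho α)^[k] v := by
  induction k with
  | zero => simpa using hv
  | succ k ih =>
    rw [Function.iterate_succ_apply']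
    calc (0:ℝ) ≤ (rho α)^[k] v / 2 := by linarith
      _ ≤ rho α ((rho α)^[k] v) := rho_ge_half hsm h0 ih

lemma iter_pos {v : ℝ} (hv : 0 < v) (k : ℕ) : 0 < (rho α)^[k] v := by
  induction k with
  | zero => simpa using hv
  | succ k ih =>
    rw [Function.iterate_succ_apply']
    calc (0:ℝ) < (rho α)^[k] v / 2 := by linarith
      _ ≤ rho α ((rho α)^[k] v) := rho_ge_half hsm h0 ih.le

lemma iter_zero (k : ℕ) : (rho α)^[k] 0 = 0 :=
  Function.iterate_fixed (rho_zero hsm h0) k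

lemma iter_anti {v : ℝ} (hv : 0 ≤ v) : Antitone fun k => (rho α)^[k] v := by
  refine antitone_nat_of_succ_le ?_
  intro k
  rw [Function.iterate_succ_apply']
  exact rho_le_self hsm h0 (iter_nonneg hsm h0 hv k)

lemma iter_tendsto {v : ℝ} (hv : 0 ≤ v) :
    Tendsto (fun k => (rho α)^[k] v) atTop (nhds 0) := by
  have hbdd : BddBelow (Set.range fun k => (rho α)^[k] v) :=
    ⟨0, by rintro x ⟨k, rfl⟩; exact iter_nonneg hsm h0 hv k⟩
  have htend := tendsto_atTop_ciInf (iter_anti hsm h0 hv) hbdd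
  set L := ⨅ k, (rho α)^[k] v with hL
  have hL0 : 0 ≤ L := le_ciInf fun k => iter_nonneg hsm h0 hv k
  have hfix : rho α L = L := by
    have h1 : Tendsto (fun k => rho α ((rho α)^[k] v)) atTop (nhds (rho α L)) :=
      ((rho_continuous hsm h0).continuousAt.tendsto).comp htend
    have h2 : Tendsto (fun k => (rho α)^[k+1] v) atTop (nhds L) :=
      htend.comp (tendsto_add_atTop_nat 1)
    have heq : (fun k => (rho α)^[k+1] v) = fun k => rho α ((rho α)^[k] v) := by
      funext k; rw [Function.iterate_succ_apply']
    rw [heq] at h2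
    exact tendsto_nhds_unique h1 h2
  rcases eq_or_lt_of_le hL0 with h | h
  · rw [← h] at htend; exact htend
  · exact absurd hfix (ne_of_lt (rho_lt_self hsm h0 h))

end DeltaAux2

open DeltaAux DeltaAux2

/-- Dissipation-form δISS Lyapunov theorem: existence of a δISS Lyapunov function
implies incremental input-to-state stability of `x(k+1) = f(x(k),u(k))`. -/
theorem deltaISS_of_lyapunov {n m : ℕ}
    (f : EuclideanSpace ℝ (Fin n) → EuclideanSpace ℝ (Fin m) → EuclideanSpace ℝ (Fin n))
    (V : EuclideanSpace ℝ (Fin n) → EuclideanSpace ℝ (Fin n) → ℝ)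
    (hVnonneg : ∀ xa xb, 0 ≤ V xa xb)
    (α₁ α₂ α₃ : ℝ → ℝ) (α₄ : ℝ → ℝ)
    (h1 : IsKInfFun α₁) (h2 : IsKInfFun α₂) (h3 : IsKInfFun α₃) (h4 : IsKFun α₄)
    (hlow : ∀ xa xb, α₁ ‖xa - xb‖ ≤ V xa xb)
    (hup : ∀ xa xb, V xa xb ≤ α₂ ‖xa - xb‖)
    (hdecr : ∀ xa xb ua ub,
      V (f xa ua) (f xb ub) - V xa xb ≤ -α₃ ‖xa - xb‖ + α₄ ‖ua - ub‖) :
    ∃ (β : ℝ → ℕ → ℝ) (γ : ℝ → ℝ), IsKLFun β ∧ IsKInfFun γ ∧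
      ∀ (xa xb : ℕ → EuclideanSpace ℝ (Fin n)) (ua ub : ℕ → EuclideanSpace ℝ (Fin m)),
        (∀ k, xa (k + 1) = f (xa k) (ua k)) →
        (∀ k, xb (k + 1) = f (xb k) (ub k)) →
        BddAbove (Set.range fun h => ‖ua h - ub h‖) →
        ∀ k, ‖xa k - xb k‖ ≤ β (‖xa 0 - xb 0‖) k + γ (⨆ h, ‖ua h - ub h‖) := by
  have h2sm : StrictMono (ext α₂) := ext_strictMono h2.1
  have h3sm : StrictMono (ext α₃) := ext_strictMono h3.1
  set A : ℝ → ℝ := fun v => ext α₃ (kinv α₂ h2 v) with hA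
  have hAsm : StrictMono A := h3sm.comp (kinv_strictMono h2)
  have hA0 : A 0 = 0 := by
    show ext α₃ (kinv α₂ h2 0) = 0
    rw [kinv_zero h2, ext_zero h3.1]
  set ρ : ℝ → ℝ := rho A with hρdef
  set i₁ : ℝ → ℝ := kinv α₁ h1 with hi1
  set i₃ : ℝ → ℝ := kinv α₃ h3 with hi3
  set e₂ : ℝ → ℝ := ext α₂ with he2
  have he2nonneg : ∀ t : ℝ, 0 ≤ t → 0 ≤ e₂ t := by
    intro t ht
    have h := h2sm.monotone ht
    rwa [he2, ext_zero h2.1] at h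
  have hα₄mono : MonotoneOn α₄ (Set.Ici 0) := h4.2.1.monotoneOn
  have hα₄nonneg : ∀ t : ℝ, 0 ≤ t → 0 ≤ α₄ t := by
    intro t ht
    have := hα₄mono Set.self_mem_Ici ht ht
    rwa [h4.2.2] at this
  set g₁ : ℝ → ℝ := fun t => i₁ (2 * (e₂ (i₃ (2 * α₄ t)) + α₄ t)) with hg1
  refine ⟨fun s k => i₁ (2 * ρ^[k] (e₂ (max s 0))), fun d => g₁ (max d 0) + max d 0,
    ⟨?_, ?_, ?_⟩, ⟨⟨?_, ?_, ?_⟩, ?_⟩, ?_⟩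
  · -- class K in s for each k
    intro k
    refine ⟨?_, ?_, ?_⟩
    · exact (kinv_continuous h1).comp (continuous_const.mul
        (((rho_continuous hAsm hA0).iterate k).comp
          ((ext_continuous h2.1).comp (continuous_id.max continuous_const))))
    · intro s hs t ht hst
      have hs' : (0:ℝ) ≤ s := hs
      have ht' : (0:ℝ) ≤ t := ht
      simp only [max_eq_left hs', max_eq_left ht']
      exact kinv_strictMono h1 (mul_lt_mul_of_pos_left
        (((rho_strictMono hAsm hA0).iterate k) (h2sm hst)) two_pos)
    · show i₁ (2 * ρ^[k] (e₂ (max 0 0)) ) = 0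
      rw [max_self, he2, ext_zero h2.1, hρdef, iter_zero hAsm hA0 k, mul_zero, hi1, kinv_zero h1]
  · -- strict anti in k
    intro s hs
    refine strictAnti_nat_of_succ_lt fun k => ?_
    have hc : 0 < e₂ (max s 0) := by
      rw [max_eq_left hs.le, ← ext_zero h2.1]
      exact h2sm hs
    have hlt : ρ^[k+1] (e₂ (max s 0)) < ρ^[k] (e₂ (max s 0)) := by
      rw [Function.iterate_succ_apply']
      exact rho_lt_self hAsm hA0 (iter_pos hAsm hA0 hc k)
    exact kinv_strictMono h1 (mul_lt_mul_of_pos_left hlt two_pos)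
  · -- tendsto 0
    intro s hs
    have hc : 0 ≤ e₂ (max s 0) := he2nonneg _ (le_max_right _ _)
    have hcont : Continuous fun x : ℝ => i₁ (2 * x) :=
      (kinv_continuous h1).comp (continuous_const.mul continuous_id)
    have htend := (hcont.continuousAt (x := (0:ℝ))).tendsto.comp (iter_tendsto hAsm hA0 hc)
    simpa [Function.comp_def, hi1, kinv_zero h1] using htend
  · -- γ continuous
    have hmax : Continuous fun d : ℝ => max d 0 := continuous_id.max continuous_const
    have h4c := h4.1
    refine Continuous.add ?_ hmax
    refine (kinv_continuous h1).comp (continuous_const.mul (Continuous.add ?_ (h4c.comp hmax)))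
    exact (ext_continuous h2.1).comp ((kinv_continuous h3).comp
      (continuous_const.mul (h4c.comp hmax)))
  · -- γ strict mono on Ici 0
    intro d hd d' hd' hlt
    have hd0 : (0:ℝ) ≤ d := hd
    have hd'0 : (0:ℝ) ≤ d' := hd'
    simp only [max_eq_left hd0, max_eq_left hd'0]
    have hα₄le : α₄ d ≤ α₄ d' := hα₄mono hd hd' hlt.le
    have hle : g₁ d ≤ g₁ d' := by
      simp only [hg1, max_eq_left hd0, max_eq_left hd'0]
      refine (kinv_strictMono h1).monotone (mul_le_mul_of_nonneg_left ?_ (by norm_num))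
      refine add_le_add ?_ hα₄le
      exact h2sm.monotone ((kinv_strictMono h3).monotone (by linarith))
    calc g₁ d + d ≤ g₁ d' + d := add_le_add_left hle d
      _ < g₁ d' + d' := add_lt_add_right hlt _
  · -- γ 0 = 0
    show g₁ (max 0 0) + max 0 0 = 0
    rw [max_self]
    simp only [hg1]
    rw [h4.2.2, mul_zero, hi3, kinv_zero h3, he2, ext_zero h2.1]
    norm_num [hi1, kinv_zero h1]
  · -- γ tendsto atTop
    refine tendsto_atTop_mono (fun d => ?_) tendsto_id
    have h5 : 0 ≤ α₄ (max d 0) := hα₄nonneg _ (le_max_right _ _)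
    have h6 : 0 ≤ i₃ (2 * α₄ (max d 0)) := kinv_nonneg h3 (by linarith)
    have h7 : 0 ≤ g₁ (max d 0) := kinv_nonneg h1 (by nlinarith [he2nonneg _ h6])
    have := le_max_left d 0
    show (id d : ℝ) ≤ g₁ (max d 0) + max d 0
    simp only [id]
    linarith
  · -- the trajectory bound
    intro xa xb ua ub hxa hxb hbdd k
    set d : ℝ := ⨆ h, ‖ua h - ub h‖ with hd
    have hdle : ∀ j, ‖ua j - ub j‖ ≤ d := fun j => le_ciSup hbdd j
    have hd0 : 0 ≤ d := le_trans (norm_nonneg _) (hdle 0)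
    set μ := α₄ d with hμ
    have hμ0 : 0 ≤ μ := hα₄nonneg d hd0
    set L := e₂ (i₃ (2 * μ)) + μ with hL
    have hi₃μ : 0 ≤ i₃ (2 * μ) := kinv_nonneg h3 (by linarith)
    have hL0 : 0 ≤ L := add_nonneg (he2nonneg _ hi₃μ) hμ0
    set V0 := V (xa 0) (xb 0) with hV0
    have hstep : ∀ j, V (xa (j+1)) (xb (j+1)) ≤ V (xa j) (xb j) - A (V (xa j) (xb j)) + μ := by
      intro j
      rw [hxa j, hxb j]
      have h5 := hdecr (xa j) (xb j) (ua j) (ub j)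
      have h6 : A (V (xa j) (xb j)) ≤ α₃ ‖xa j - xb j‖ := by
        have hv2 : V (xa j) (xb j) ≤ ext α₂ ‖xa j - xb j‖ := by
          rw [ext_of_nonneg (norm_nonneg _)]; exact hup _ _
        have h7 : kinv α₂ h2 (V (xa j) (xb j)) ≤ ‖xa j - xb j‖ := by
          have := (kinv_strictMono h2).monotone hv2
          rwa [kinv_ext h2] at this
        calc A (V (xa j) (xb j)) = ext α₃ (kinv α₂ h2 (V (xa j) (xb j))) := rfl
          _ ≤ ext α₃ ‖xa j - xb j‖ := h3sm.monotone h7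
          _ = α₃ ‖xa j - xb j‖ := ext_of_nonneg (norm_nonneg _)
      have h8 : α₄ ‖ua j - ub j‖ ≤ μ := hα₄mono (norm_nonneg _) hd0 (hdle j)
      linarith
    have hAnn : ∀ j, 0 ≤ A (V (xa j) (xb j)) := by
      intro j
      have h9 : 0 ≤ kinv α₂ h2 (V (xa j) (xb j)) := kinv_nonneg h2 (hVnonneg _ _)
      calc (0:ℝ) = ext α₃ 0 := (ext_zero h3.1).symm
        _ ≤ ext α₃ (kinv α₂ h2 (V (xa j) (xb j))) := h3sm.monotone h9
    have hmain : ∀ j, V (xa j) (xb j) ≤ max (ρ^[j] V0) L := by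
      intro j
      induction j with
      | zero => exact le_max_left V0 L
      | succ j ih =>
        by_cases hc : 2 * μ ≤ A (V (xa j) (xb j))
        · have h9 := hstep j
          have h10 : V (xa (j+1)) (xb (j+1)) ≤ ρ (V (xa j) (xb j)) := by
            have := rho_key hAsm hA0 (hVnonneg (xa j) (xb j)) hc
            simp only [hρdef]
            linarith
          have h11 : ρ (V (xa j) (xb j)) ≤ ρ (max (ρ^[j] V0) L) :=
            (rho_strictMono hAsm hA0).monotone ih
          have h12 : ρ (max (ρ^[j] V0) L) ≤ max (ρ^[j+1] V0) L := by
            rcases max_cases (ρ^[j] V0) L with ⟨heq, _⟩ | ⟨heq, _⟩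
            · rw [heq, Function.iterate_succ_apply']
              exact le_max_left _ _
            · rw [heq]
              exact le_max_of_le_right (rho_le_self hAsm hA0 hL0)
          linarith
        · push_neg at hc
          have h13 : V (xa j) (xb j) < e₂ (i₃ (2 * μ)) := by
            have h14 : ext α₃ (kinv α₂ h2 (V (xa j) (xb j))) < ext α₃ (i₃ (2 * μ)) := by
              rw [hi3, ext_kinv h3]
              exact hc
            have h15 := h3sm.lt_iff_lt.mp h14
            calc V (xa j) (xb j) = e₂ (kinv α₂ h2 (V (xa j) (xb j))) := (ext_kinv h2 _).symm
              _ < e₂ (i₃ (2 * μ)) := h2sm h15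
          have h9 := hstep j
          have h16 := hAnn j
          refine le_max_of_le_right ?_
          rw [hL]; linarith
    have h15 : α₁ ‖xa k - xb k‖ ≤ ρ^[k] V0 + L :=
      le_trans (hlow _ _) ((hmain k).trans
        (max_le_add_of_nonneg (iter_nonneg hAsm hA0 (hVnonneg _ _) k) hL0))
    have h16 : ‖xa k - xb k‖ ≤ i₁ (ρ^[k] V0 + L) := by
      have ha : ext α₁ ‖xa k - xb k‖ ≤ ρ^[k] V0 + L := by
        rw [ext_of_nonneg (norm_nonneg _)]; exact h15
      have := (kinv_strictMono h1).monotone ha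
      rwa [kinv_ext h1] at this
    have hiter0 : 0 ≤ ρ^[k] V0 := iter_nonneg hAsm hA0 (hVnonneg _ _) k
    have h17 : i₁ (ρ^[k] V0 + L) ≤ i₁ (2 * ρ^[k] V0) + i₁ (2 * L) := by
      have hsum : ρ^[k] V0 + L ≤ max (2 * ρ^[k] V0) (2 * L) := by
        rcases le_total (ρ^[k] V0) L with h | h
        · exact le_max_of_le_right (by linarith)
        · exact le_max_of_le_left (by linarith)
      calc i₁ (ρ^[k] V0 + L) ≤ i₁ (max (2 * ρ^[k] V0) (2 * L)) :=
            (kinv_strictMono h1).monotone hsum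
        _ = max (i₁ (2 * ρ^[k] V0)) (i₁ (2 * L)) := (kinv_strictMono h1).monotone.map_max
        _ ≤ i₁ (2 * ρ^[k] V0) + i₁ (2 * L) :=
            max_le_add_of_nonneg (kinv_nonneg h1 (by linarith)) (kinv_nonneg h1 (by linarith))
    have h18 : i₁ (2 * ρ^[k] V0) ≤ i₁ (2 * ρ^[k] (e₂ (max ‖xa 0 - xb 0‖ 0))) := by
      refine (kinv_strictMono h1).monotone (mul_le_mul_of_nonneg_left ?_ (by norm_num))
      refine ((rho_strictMono hAsm hA0).iterate k).monotone ?_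
      rw [max_eq_left (norm_nonneg _), he2, ext_of_nonneg (norm_nonneg _)]
      exact hup _ _
    have h19 : i₁ (2 * L) = g₁ (max d 0) := by
      simp only [hg1, max_eq_left hd0]
      rfl
    have h20 : (0:ℝ) ≤ max d 0 := le_max_right _ _
    calc ‖xa k - xb k‖ ≤ i₁ (ρ^[k] V0 + L) := h16
      _ ≤ i₁ (2 * ρ^[k] V0) + i₁ (2 * L) := h17
      _ ≤ i₁ (2 * ρ^[k] (e₂ (max ‖xa 0 - xb 0‖ 0))) + (g₁ (max d 0) + max d 0) := by
          rw [← h19]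
          linarith [h18, h20]
      _ = _ := rfl
end

section
/- Suppose the symmetric block matrix [[P - Q_x, -ÃᵀΛ, 0, AᵀP], [-ΛÃ, 2Λ - ΛB̃_s - B̃_sᵀΛ, -ΛB̃, B_sᵀP], [0, -B̃ᵀΛ, Q_u, BᵀP], [PA, PB_s, PB, P]] is positive semidefinite, where P, Q_x ∈ S_+^n, Q_u ∈ S_+^m, Λ ∈ D_+^ν. Then for all Δx ∈ ℝ^n, Δu ∈ ℝ^m, Δs ∈ ℝ^ν satisfying the sector condition (ÃΔx + B̃Δu + (B̃_s - I)Δs)ᵀ Λ Δs ≥ 0, the incremental Lyapunov decrease ‖AΔx + BΔu + B_sΔs‖²_P - ‖Δx‖²_P ≤ -‖Δx‖²_{Q_x} + ‖Δu‖²_{Q_u} holds. -/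
open Matrix

private lemma aux1 {a b : Type*} [Fintype a] [Fintype b]
    (M : Matrix a b ℝ) (N : Matrix a a ℝ) (x : b → ℝ) (y : a → ℝ) :
    x ⬝ᵥ ((Mᵀ * N) *ᵥ y) = (M *ᵥ x) ⬝ᵥ (N *ᵥ y) := by
  rw [← Matrix.mulVec_mulVec, Matrix.dotProduct_mulVec, Matrix.vecMul_transpose]

private lemma aux2 {a b : Type*} [Fintype a] [Fintype b]
    (M : Matrix a b ℝ) (N : Matrix a a ℝ) (hN : Nᵀ = N) (x : b → ℝ) (y : a → ℝ) :
    y ⬝ᵥ ((N * M) *ᵥ x) = (M *ᵥ x) ⬝ᵥ (N *ᵥ y) := by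
  rw [← Matrix.mulVec_mulVec, Matrix.dotProduct_mulVec]
  conv_lhs => rw [← hN]
  rw [Matrix.vecMul_transpose, dotProduct_comm]


/-- Core step of the δISS LMI lemma: positive semidefiniteness of the 4×4 block
matrix implies the incremental quadratic Lyapunov decrease for all increments
satisfying the sector condition. -/
theorem lmi_implies_decrease {n ν m : ℕ}
    (P Qx : Matrix (Fin n) (Fin n) ℝ) (Qu : Matrix (Fin m) (Fin m) ℝ)
    (hP : P.PosDef) (hQx : Qx.PosDef) (hQu : Qu.PosDef)
    (lam : Fin ν → ℝ) (hlam : ∀ i, 0 < lam i)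
    (A : Matrix (Fin n) (Fin n) ℝ) (B : Matrix (Fin n) (Fin m) ℝ)
    (Bs : Matrix (Fin n) (Fin ν) ℝ)
    (At : Matrix (Fin ν) (Fin n) ℝ) (Bt : Matrix (Fin ν) (Fin m) ℝ)
    (Bst : Matrix (Fin ν) (Fin ν) ℝ)
    (hLMI : (Matrix.fromBlocks
        (Matrix.fromBlocks
          (Matrix.fromBlocks (P - Qx) (-(Atᵀ * Matrix.diagonal lam))
            (-(Matrix.diagonal lam * At))
            ((2 : ℝ) • Matrix.diagonal lam - Matrix.diagonal lam * Bst
              - Bstᵀ * Matrix.diagonal lam))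
          (Matrix.fromRows 0 (-(Matrix.diagonal lam * Bt)))
          (Matrix.fromCols 0 (-(Btᵀ * Matrix.diagonal lam)))
          Qu)
        (Matrix.fromRows (Matrix.fromRows (Aᵀ * P) (Bsᵀ * P)) (Bᵀ * P))
        (Matrix.fromCols (Matrix.fromCols (P * A) (P * Bs)) (P * B))
        P).PosSemidef) :
    ∀ (Δx : Fin n → ℝ) (Δu : Fin m → ℝ) (Δs : Fin ν → ℝ),
      0 ≤ (At *ᵥ Δx + Bt *ᵥ Δu + (Bst - 1) *ᵥ Δs) ⬝ᵥ (Matrix.diagonal lam *ᵥ Δs) →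
      (A *ᵥ Δx + B *ᵥ Δu + Bs *ᵥ Δs) ⬝ᵥ P *ᵥ (A *ᵥ Δx + B *ᵥ Δu + Bs *ᵥ Δs)
          - Δx ⬝ᵥ P *ᵥ Δx
        ≤ -(Δx ⬝ᵥ Qx *ᵥ Δx) + Δu ⬝ᵥ Qu *ᵥ Δu := by
  intro Δx Δu Δs hσ
  have hPsym : Pᵀ = P := hP.isHermitian.eq
  have hΛsym : (Matrix.diagonal lam)ᵀ = Matrix.diagonal lam := Matrix.diagonal_transpose lam
  set y : Fin n → ℝ := A *ᵥ Δx + B *ᵥ Δu + Bs *ᵥ Δs with hy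
  have h := hLMI.dotProduct_mulVec_nonneg (Sum.elim (Sum.elim (Sum.elim Δx Δs) Δu) (-y))
  simp only [star_trivial, fromBlocks_mulVec, fromRows_mulVec, fromCols_mulVec_sumElim,
    sumElim_dotProduct_sumElim, Sum.elim_comp_inl, Sum.elim_comp_inr,
    Matrix.sub_mulVec, Matrix.neg_mulVec, Matrix.mulVec_neg, Matrix.zero_mulVec,
    Matrix.smul_mulVec, dotProduct_add, dotProduct_sub, dotProduct_neg,
    neg_dotProduct, dotProduct_smul, smul_eq_mul, zero_add, add_zero, neg_neg,
    dotProduct_zero, zero_dotProduct, Matrix.mulVec_zero] at h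
  -- sector expansion
  rw [Matrix.sub_mulVec, Matrix.one_mulVec] at hσ
  simp only [add_dotProduct, sub_dotProduct] at hσ
  have e1 : Δx ⬝ᵥ ((Atᵀ * Matrix.diagonal lam) *ᵥ Δs)
      = (At *ᵥ Δx) ⬝ᵥ (Matrix.diagonal lam *ᵥ Δs) := aux1 ..
  have e2 : Δs ⬝ᵥ ((Matrix.diagonal lam * At) *ᵥ Δx)
      = (At *ᵥ Δx) ⬝ᵥ (Matrix.diagonal lam *ᵥ Δs) := aux2 _ _ hΛsym ..
  have e3 : Δs ⬝ᵥ ((Matrix.diagonal lam * Bst) *ᵥ Δs)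
      = (Bst *ᵥ Δs) ⬝ᵥ (Matrix.diagonal lam *ᵥ Δs) := aux2 _ _ hΛsym ..
  have e4 : Δs ⬝ᵥ ((Bstᵀ * Matrix.diagonal lam) *ᵥ Δs)
      = (Bst *ᵥ Δs) ⬝ᵥ (Matrix.diagonal lam *ᵥ Δs) := aux1 ..
  have e5 : Δs ⬝ᵥ ((Matrix.diagonal lam * Bt) *ᵥ Δu)
      = (Bt *ᵥ Δu) ⬝ᵥ (Matrix.diagonal lam *ᵥ Δs) := aux2 _ _ hΛsym ..
  have e6 : Δu ⬝ᵥ ((Btᵀ * Matrix.diagonal lam) *ᵥ Δs)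
      = (Bt *ᵥ Δu) ⬝ᵥ (Matrix.diagonal lam *ᵥ Δs) := aux1 ..
  have e7 : Δs ⬝ᵥ (Matrix.diagonal lam *ᵥ Δs)
      = Δs ⬝ᵥ (Matrix.diagonal lam *ᵥ Δs) := rfl
  have f1 : Δx ⬝ᵥ ((Aᵀ * P) *ᵥ y) = (A *ᵥ Δx) ⬝ᵥ (P *ᵥ y) := aux1 ..
  have f2 : Δs ⬝ᵥ ((Bsᵀ * P) *ᵥ y) = (Bs *ᵥ Δs) ⬝ᵥ (P *ᵥ y) := aux1 ..
  have f3 : Δu ⬝ᵥ ((Bᵀ * P) *ᵥ y) = (B *ᵥ Δu) ⬝ᵥ (P *ᵥ y) := aux1 ..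
  have g1 : y ⬝ᵥ ((P * A) *ᵥ Δx) = (A *ᵥ Δx) ⬝ᵥ (P *ᵥ y) := aux2 _ _ hPsym ..
  have g2 : y ⬝ᵥ ((P * Bs) *ᵥ Δs) = (Bs *ᵥ Δs) ⬝ᵥ (P *ᵥ y) := aux2 _ _ hPsym ..
  have g3 : y ⬝ᵥ ((P * B) *ᵥ Δu) = (B *ᵥ Δu) ⬝ᵥ (P *ᵥ y) := aux2 _ _ hPsym ..
  have hyP : (A *ᵥ Δx) ⬝ᵥ (P *ᵥ y) + (B *ᵥ Δu) ⬝ᵥ (P *ᵥ y) + (Bs *ᵥ Δs) ⬝ᵥ (P *ᵥ y)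
      = y ⬝ᵥ (P *ᵥ y) := by
    rw [hy]; simp [add_dotProduct]
  linarith [h, hσ, e1, e2, e3, e4, e5, e6, f1, f2, f3, g1, g2, g3, hyP]
end

section
/- Let Q̃ = diag(Q_C, Q_D, Q_s) with Q_C ∈ S_+^n, Q_D ∈ S_+^m, Q_s ∈ D_+^ν, and let H = [H_x, H_u, H_s] with θ = H Q̃⁻¹ partitioned conformally as θ = [C, D, D_s]. Suppose the LMI (13) of the paper holds: the 4×4 symmetric block matrix with blocks (1,1) = Q_C - Q̃_x, (1,2) = -Q_CÃ_xᵀ - H_xᵀB̃_yᵀ, (1,4) = Q_CA_xᵀ + H_xᵀB_yᵀ, (2,2) = 2Q_s - B̃_s^oQ_s - B̃_yH_s - Q_s(B̃_s^o)ᵀ - H_sᵀB̃_yᵀ, (2,3) = -B̃_uQ_D - B̃_yH_u, (2,4) = Q_sB_sᵀ, (3,3) = Q̃_u, (3,4) = Q_DB_uᵀ + H_uᵀB_yᵀ, (4,4) = Q_C (others zero) is positive semidefinite, where Q̃_x ∈ S_+^n, Q̃_u ∈ S_+^m. Then, defining A = A_x + B_yC, B = B_u + B_yD, B_s' = B_s^o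 + B_yD_s, Ã = Ã_x + B̃_yC, B̃ = B̃_u + B̃_yD, B̃_s = B̃_s^o + B̃_yD_s, the congruence-transformed matrix [[P - Q_x, -ÃᵀΛ, 0, AᵀP], [-ΛÃ, 2Λ - ΛB̃_s - B̃_sᵀΛ, -ΛB̃, B_s'ᵀP], [0, -B̃ᵀΛ, Q_u, BᵀP], [PA, PB_s', PB, P]] is positive semidefinite with P = Q_C⁻¹, Λ = Q_s⁻¹, Q_x = PQ̃_xP, Q_u = Q_D⁻¹Q̃_uQ_D⁻¹. -/
open Matrix

/-- Linearising change of variables in the proof of the δISS LMI for trained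
models: if the lifted LMI (13) holds, then the congruence-transformed δISS LMI
holds with `P = Q_C⁻¹`, `Λ = Q_s⁻¹`, `Q_x = PQ̃_xP`, `Q_u = Q_D⁻¹Q̃_uQ_D⁻¹`. -/
theorem lifted_lmi_implies_deltaISS_lmi {n ν m p : ℕ}
    (Ax : Matrix (Fin n) (Fin n) ℝ) (Bu : Matrix (Fin n) (Fin m) ℝ)
    (Bso : Matrix (Fin n) (Fin ν) ℝ) (By : Matrix (Fin n) (Fin p) ℝ)
    (Atx : Matrix (Fin ν) (Fin n) ℝ) (Btu : Matrix (Fin ν) (Fin m) ℝ)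
    (Btso : Matrix (Fin ν) (Fin ν) ℝ) (Bty : Matrix (Fin ν) (Fin p) ℝ)
    (Hx : Matrix (Fin p) (Fin n) ℝ) (Hu : Matrix (Fin p) (Fin m) ℝ)
    (Hs : Matrix (Fin p) (Fin ν) ℝ)
    (QC Qtx : Matrix (Fin n) (Fin n) ℝ) (hQC : QC.PosDef) (hQtx : Qtx.PosDef)
    (QD Qtu : Matrix (Fin m) (Fin m) ℝ) (hQD : QD.PosDef) (hQtu : Qtu.PosDef)
    (d : Fin ν → ℝ) (hd : ∀ i, 0 < d i)
    -- trained model matrices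
    (C : Matrix (Fin p) (Fin n) ℝ) (hC : C = Hx * QC⁻¹)
    (D : Matrix (Fin p) (Fin m) ℝ) (hD : D = Hu * QD⁻¹)
    (Ds : Matrix (Fin p) (Fin ν) ℝ) (hDs : Ds = Hs * (Matrix.diagonal d)⁻¹)
    (A : Matrix (Fin n) (Fin n) ℝ) (hA : A = Ax + By * C)
    (B : Matrix (Fin n) (Fin m) ℝ) (hB : B = Bu + By * D)
    (Bs' : Matrix (Fin n) (Fin ν) ℝ) (hBs' : Bs' = Bso + By * Ds)
    (At : Matrix (Fin ν) (Fin n) ℝ) (hAt : At = Atx + Bty * C)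
    (Bt : Matrix (Fin ν) (Fin m) ℝ) (hBt : Bt = Btu + Bty * D)
    (Bst : Matrix (Fin ν) (Fin ν) ℝ) (hBst : Bst = Btso + Bty * Ds)
    -- the lifted LMI (13)
    (hLMI : (Matrix.fromBlocks
        (Matrix.fromBlocks
          (Matrix.fromBlocks (QC - Qtx) (-(QC * Atxᵀ) - Hxᵀ * Btyᵀ)
            (-(Atx * QC) - Bty * Hx)
            ((2 : ℝ) • Matrix.diagonal d - Btso * Matrix.diagonal d - Bty * Hs
              - Matrix.diagonal d * Btsoᵀ - Hsᵀ * Btyᵀ))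
          (Matrix.fromRows 0 (-(Btu * QD) - Bty * Hu))
          (Matrix.fromCols 0 (-(QD * Btuᵀ) - Huᵀ * Btyᵀ))
          Qtu)
        (Matrix.fromRows
          (Matrix.fromRows (QC * Axᵀ + Hxᵀ * Byᵀ) (Matrix.diagonal d * Bs'ᵀ))
          (QD * Buᵀ + Huᵀ * Byᵀ))
        (Matrix.fromCols
          (Matrix.fromCols (Ax * QC + By * Hx) (Bs' * Matrix.diagonal d))
          (Bu * QD + By * Hu))
        QC).PosSemidef) :
    (Matrix.fromBlocks
        (Matrix.fromBlocks
          (Matrix.fromBlocks (QC⁻¹ - QC⁻¹ * Qtx * QC⁻¹)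
            (-(Atᵀ * (Matrix.diagonal d)⁻¹))
            (-((Matrix.diagonal d)⁻¹ * At))
            ((2 : ℝ) • (Matrix.diagonal d)⁻¹ - (Matrix.diagonal d)⁻¹ * Bst
              - Bstᵀ * (Matrix.diagonal d)⁻¹))
          (Matrix.fromRows 0 (-((Matrix.diagonal d)⁻¹ * Bt)))
          (Matrix.fromCols 0 (-(Btᵀ * (Matrix.diagonal d)⁻¹)))
          (QD⁻¹ * Qtu * QD⁻¹))
        (Matrix.fromRows
          (Matrix.fromRows (Aᵀ * QC⁻¹) (Bs'ᵀ * QC⁻¹))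
          (Bᵀ * QC⁻¹))
        (Matrix.fromCols
          (Matrix.fromCols (QC⁻¹ * A) (QC⁻¹ * Bs'))
          (QC⁻¹ * B))
        QC⁻¹).PosSemidef := by

  -- Substitute the defined matrices.
  subst hC hD hDs hA hB hBs' hAt hBt hBst
  -- Invertibility facts
  have hdetC : IsUnit QC.det := hQC.det_pos.ne'.isUnit
  have hdetD : IsUnit QD.det := hQD.det_pos.ne'.isUnit
  have hdetL : IsUnit (Matrix.diagonal d).det := by
    rw [Matrix.det_diagonal]
    exact (Finset.prod_pos fun i _ => hd i).ne'.isUnit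
  have h1 : QC⁻¹ * QC = 1 := Matrix.nonsing_inv_mul QC hdetC
  have h2 : QC * QC⁻¹ = 1 := Matrix.mul_nonsing_inv QC hdetC
  have h3 : QD⁻¹ * QD = 1 := Matrix.nonsing_inv_mul QD hdetD
  have h4 : QD * QD⁻¹ = 1 := Matrix.mul_nonsing_inv QD hdetD
  have h5 : (Matrix.diagonal d)⁻¹ * Matrix.diagonal d = 1 := Matrix.nonsing_inv_mul _ hdetL
  have h6 : Matrix.diagonal d * (Matrix.diagonal d)⁻¹ = 1 := Matrix.mul_nonsing_inv _ hdetL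
  -- cancellation lemmas
  have c1 : ∀ {α : Type} (X : Matrix (Fin n) α ℝ), QC⁻¹ * (QC * X) = X := fun X => by
    rw [← Matrix.mul_assoc, h1, Matrix.one_mul]
  have c2 : ∀ {α : Type} (X : Matrix (Fin n) α ℝ), QC * (QC⁻¹ * X) = X := fun X => by
    rw [← Matrix.mul_assoc, h2, Matrix.one_mul]
  have c3 : ∀ {α : Type} (X : Matrix (Fin m) α ℝ), QD⁻¹ * (QD * X) = X := fun X => by
    rw [← Matrix.mul_assoc, h3, Matrix.one_mul]
  have c4 : ∀ {α : Type} (X : Matrix (Fin m) α ℝ), QD * (QD⁻¹ * X) = X := fun X => by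
    rw [← Matrix.mul_assoc, h4, Matrix.one_mul]
  have c5 : ∀ {α : Type} (X : Matrix (Fin ν) α ℝ),
      (Matrix.diagonal d)⁻¹ * (Matrix.diagonal d * X) = X := fun X => by
    rw [← Matrix.mul_assoc, h5, Matrix.one_mul]
  have c6 : ∀ {α : Type} (X : Matrix (Fin ν) α ℝ),
      Matrix.diagonal d * ((Matrix.diagonal d)⁻¹ * X) = X := fun X => by
    rw [← Matrix.mul_assoc, h6, Matrix.one_mul]
  -- symmetry facts
  have t0 : QCᵀ = QC := by
    rw [← Matrix.conjTranspose_eq_transpose_of_trivial]; exact hQC.isHermitian.eq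
  have t0D : QDᵀ = QD := by
    rw [← Matrix.conjTranspose_eq_transpose_of_trivial]; exact hQD.isHermitian.eq
  have t1 : (QC⁻¹)ᵀ = QC⁻¹ := by rw [Matrix.transpose_nonsing_inv, t0]
  have t2 : (QD⁻¹)ᵀ = QD⁻¹ := by rw [Matrix.transpose_nonsing_inv, t0D]
  have t3 : (Matrix.diagonal d)ᵀ = Matrix.diagonal d := Matrix.diagonal_transpose d
  have t4 : ((Matrix.diagonal d)⁻¹)ᵀ = (Matrix.diagonal d)⁻¹ := by
    rw [Matrix.transpose_nonsing_inv, t3]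
  -- the congruence transformation
  set T : Matrix ((((Fin n) ⊕ (Fin ν)) ⊕ (Fin m)) ⊕ (Fin n))
      ((((Fin n) ⊕ (Fin ν)) ⊕ (Fin m)) ⊕ (Fin n)) ℝ :=
    Matrix.fromBlocks
      (Matrix.fromBlocks (Matrix.fromBlocks QC⁻¹ 0 0 (Matrix.diagonal d)⁻¹) 0 0 QD⁻¹)
      0 0 QC⁻¹ with hTdef
  have hT : Tᴴ = T := by
    simp [hTdef, Matrix.conjTranspose_eq_transpose_of_trivial,
      Matrix.fromBlocks_transpose, t1, t2, t4]
  have hM := hLMI.mul_mul_conjTranspose_same T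
  rw [hT] at hM
  convert hM using 2
  rw [hTdef]
  simp only [Matrix.fromBlocks_multiply, Matrix.fromBlocks_mul_fromRows,
    Matrix.fromCols_mul_fromBlocks, Matrix.fromRows_mul, Matrix.mul_fromCols,
    Matrix.mul_zero, Matrix.zero_mul, zero_add, add_zero,
    Matrix.fromBlocks_inj, Matrix.fromRows_ext_iff, Matrix.fromCols_ext_iff]
  repeat' apply And.intro
  all_goals
    simp only [Matrix.mul_add, Matrix.add_mul, Matrix.mul_sub, Matrix.sub_mul,
      Matrix.mul_neg, Matrix.neg_mul, Matrix.transpose_add, Matrix.transpose_mul,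
      Matrix.transpose_neg, Matrix.transpose_sub, Matrix.mul_smul, Matrix.smul_mul,
      Matrix.mul_assoc, t1, t2, t3, t4, h1, h2, h3, h4, h5, h6, c1, c2, c3, c4, c5, c6,
      Matrix.mul_one, Matrix.one_mul, Matrix.mul_zero, Matrix.zero_mul,
      Matrix.transpose_zero]
  all_goals try rfl
  all_goals abel
end
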